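/- arXiv:2510.10570 — 2 statements merged into one kernel-verified Lean document; each statement's English description precedes it below -/
import Mathlib

section
/- Let H be symmetric with νI ≤ H ≤ δI for 0 < ν ≤ δ, U = I - μH with 0 < μ < 1/δ, and let Π solve UΠU - Π + μ²R = 0 for symmetric PSD R. Then ‖Π‖ ≤ μ ‖R‖ / (2ν - μν²); in particular ‖Π‖ = O(μ) as μ → 0. -/
set_option maxHeartbeats 1000000

open Matrix

section SpecAux

lemma specAux_inner_eq2 {n : ℕ} (M : Matrix (Fin n) (Fin n) ℝ)
    (x y : EuclideanSpace ℝ (Fin n)) :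
    (inner ℝ (Matrix.toEuclideanCLM (𝕜 := ℝ) M x) y : ℝ)
      = (M *ᵥ (x : Fin n → ℝ)) ⬝ᵥ (y : Fin n → ℝ) := by
  have h := Matrix.ofLp_toEuclideanCLM (𝕜 := ℝ) M x
  rw [PiLp.inner_apply]
  have h2 : ∀ i, (toEuclideanCLM (𝕜 := ℝ) M) x i = (M *ᵥ (x : Fin n → ℝ)) i := by
    intro i
    rw [← Matrix.toLin'_apply M]
    exact congrFun h i
  simp [dotProduct, h2, mul_comm]

lemma specAux_inner_eq {n : ℕ} (M : Matrix (Fin n) (Fin n) ℝ) (x : EuclideanSpace ℝ (Fin n)) :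
    (inner ℝ (Matrix.toEuclideanCLM (𝕜 := ℝ) M x) x : ℝ)
      = (M *ᵥ (x : Fin n → ℝ)) ⬝ᵥ (x : Fin n → ℝ) :=
  specAux_inner_eq2 M x x

lemma specAux_inner_eq2' {n : ℕ} (M : Matrix (Fin n) (Fin n) ℝ)
    (x y : EuclideanSpace ℝ (Fin n)) :
    (inner ℝ x (Matrix.toEuclideanCLM (𝕜 := ℝ) M y) : ℝ)
      = (x : Fin n → ℝ) ⬝ᵥ (M *ᵥ (y : Fin n → ℝ)) := by
  have h := Matrix.ofLp_toEuclideanCLM (𝕜 := ℝ) M y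
  rw [PiLp.inner_apply]
  have h2 : ∀ i, (toEuclideanCLM (𝕜 := ℝ) M) y i = (M *ᵥ (y : Fin n → ℝ)) i := by
    intro i
    rw [← Matrix.toLin'_apply M]
    exact congrFun h i
  simp [dotProduct, h2, mul_comm]

lemma specAux_symm {n : ℕ} {M : Matrix (Fin n) (Fin n) ℝ} (hM : Mᵀ = M)
    (x y : EuclideanSpace ℝ (Fin n)) :
    (inner ℝ (Matrix.toEuclideanCLM (𝕜 := ℝ) M x) y : ℝ)
      = inner ℝ x (Matrix.toEuclideanCLM (𝕜 := ℝ) M y) := by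
  rw [specAux_inner_eq2, specAux_inner_eq2']
  rw [Matrix.dotProduct_mulVec, ← Matrix.mulVec_transpose, hM]

lemma specAux_quad_nonneg {n : ℕ} {M : Matrix (Fin n) (Fin n) ℝ} (hM : M.PosSemidef)
    (x : EuclideanSpace ℝ (Fin n)) :
    (0 : ℝ) ≤ inner ℝ (Matrix.toEuclideanCLM (𝕜 := ℝ) M x) x := by
  rw [specAux_inner_eq]
  have := hM.dotProduct_mulVec_nonneg (x : Fin n → ℝ)
  simpa [dotProduct_comm] using this

lemma specAux_opNorm_le {E : Type*} [NormedAddCommGroup E] [InnerProductSpace ℝ E]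
    (T : E →L[ℝ] E) (hT : ∀ x y : E, (inner ℝ (T x) y : ℝ) = inner ℝ x (T y)) {c : ℝ} (hc : 0 ≤ c)
    (h : ∀ x : E, |(inner ℝ (T x) x : ℝ)| ≤ c * ‖x‖ ^ 2) : ‖T‖ ≤ c := by
  refine T.opNorm_le_bound hc fun x => ?_
  rcases eq_or_ne (T x) 0 with h0 | h0
  · simp [h0, mul_nonneg hc (norm_nonneg x)]
  have key : ∀ y : E, (inner ℝ (T x) y : ℝ) ≤ c / 2 * (‖x‖ ^ 2 + ‖y‖ ^ 2) := by
    intro y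
    have hxy : (inner ℝ (T y) x : ℝ) = inner ℝ (T x) y := by
      rw [hT y x, real_inner_comm]
    have e1 : (inner ℝ (T (x + y)) (x + y) : ℝ)
        = inner ℝ (T x) x + inner ℝ (T y) y + 2 * inner ℝ (T x) y := by
      simp only [map_add, inner_add_left, inner_add_right, hxy]
      ring
    have e2 : (inner ℝ (T (x - y)) (x - y) : ℝ)
        = inner ℝ (T x) x + inner ℝ (T y) y - 2 * inner ℝ (T x) y := by
      simp only [map_sub, inner_sub_left, inner_sub_right, hxy]
      ring
    have p1 : (inner ℝ (T (x + y)) (x + y) : ℝ) ≤ c * ‖x + y‖ ^ 2 := le_of_abs_le (h _)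
    have p2 : -(c * ‖x - y‖ ^ 2) ≤ (inner ℝ (T (x - y)) (x - y) : ℝ) := neg_le_of_abs_le (h _)
    have q1 : ‖x + y‖ ^ 2 = ‖x‖ ^ 2 + 2 * inner ℝ x y + ‖y‖ ^ 2 := norm_add_sq_real x y
    have q2 : ‖x - y‖ ^ 2 = ‖x‖ ^ 2 - 2 * inner ℝ x y + ‖y‖ ^ 2 := norm_sub_sq_real x y
    nlinarith [e1, e2, p1, p2]
  have hTx : (0 : ℝ) < ‖T x‖ := norm_pos_iff.mpr h0
  have hx : x ≠ 0 := fun hx => h0 (by rw [hx, map_zero])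
  have hxn : (0 : ℝ) < ‖x‖ := norm_pos_iff.mpr hx
  have hk := key ((‖x‖ / ‖T x‖) • T x)
  rw [real_inner_smul_right, real_inner_self_eq_norm_sq, norm_smul, Real.norm_eq_abs,
    abs_of_nonneg (by positivity), div_mul_cancel₀ _ (ne_of_gt hTx)] at hk
  have hlhs : ‖x‖ / ‖T x‖ * ‖T x‖ ^ 2 = ‖x‖ * ‖T x‖ := by
    field_simp
  rw [hlhs] at hk
  nlinarith

end SpecAux



open Matrix

/-- Spectral (ℓ₂ operator) norm of a real square matrix. -/
noncomputable def specNorm {n : Type*} [Fintype n] [DecidableEq n]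
    (A : Matrix n n ℝ) : ℝ :=
  ‖Matrix.toEuclideanCLM (𝕜 := ℝ) A‖

/-- Let `H` be symmetric with `νI ≤ H ≤ δI` for `0 < ν ≤ δ`, `U = I - μH`
with `0 < μ < 1/δ`, and let `Π` solve `UΠU - Pmat + μ²R = 0` for symmetric PSD `R`. Then
`‖Π‖ ≤ μ‖R‖/(2ν - μν²)`; in particular `‖Π‖ = O(μ)` as `μ → 0`. -/
theorem lyapunov_solution_norm_O_mu (n : ℕ)
    (H U R Pmat : Matrix (Fin n) (Fin n) ℝ) (ν δ μ : ℝ)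
    (hν : 0 < ν) (hνδ : ν ≤ δ)
    (hHsymm : H.IsSymm)
    (hlow : (H - ν • (1 : Matrix (Fin n) (Fin n) ℝ)).PosSemidef)
    (hup : (δ • (1 : Matrix (Fin n) (Fin n) ℝ) - H).PosSemidef)
    (hμ : 0 < μ) (hμ2 : μ < 1 / δ)
    (hU : U = 1 - μ • H)
    (hR : R.PosSemidef) (hPmat : Pmat.PosSemidef)
    (hlyap : U * Pmat * U - Pmat + μ ^ 2 • R = 0) :
    specNorm Pmat ≤ μ * specNorm R / (2 * ν - μ * ν ^ 2) := by
  classical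
  have hδ : (0 : ℝ) < δ := lt_of_lt_of_le hν hνδ
  have hμδ : μ * δ < 1 := by
    have := (lt_div_iff₀ hδ).mp hμ2
    linarith
  have hμν : μ * ν < 1 := lt_of_le_of_lt (by nlinarith) hμδ
  have hden : (0 : ℝ) < 2 * ν - μ * ν ^ 2 := by nlinarith
  set φ := Matrix.toEuclideanCLM (𝕜 := ℝ) (n := Fin n) with hφ
  have hRnn : (0 : ℝ) ≤ specNorm R := norm_nonneg _
  rcases Nat.eq_zero_or_pos n with hn | hn
  · -- trivial case
    subst hn
    haveI hss : Subsingleton (EuclideanSpace ℝ (Fin 0)) :=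
      ⟨fun a b => by ext i; exact i.elim0⟩
    have h0 : specNorm Pmat ≤ 0 := by
      show ‖Matrix.toEuclideanCLM (𝕜 := ℝ) Pmat‖ ≤ 0
      refine (Matrix.toEuclideanCLM (𝕜 := ℝ) Pmat).opNorm_le_bound le_rfl fun x => ?_
      have hx0 : x = 0 := Subsingleton.elim x 0
      simp [hx0]
    have : (0:ℝ) ≤ μ * specNorm R / (2 * ν - μ * ν ^ 2) := by positivity
    linarith
  -- quadratic form identities
  have hquad_sub : ∀ (A : Matrix (Fin n) (Fin n) ℝ) (a : ℝ) (x : EuclideanSpace ℝ (Fin n)),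
      (inner ℝ (φ (A - a • 1) x) x : ℝ) = inner ℝ (φ A x) x - a * ‖x‖ ^ 2 := by
    intro A a x
    have h1 : φ (A - a • 1) = φ A - a • φ 1 := by
      rw [map_sub, _root_.map_smul]
    have h2 : φ (1 : Matrix (Fin n) (Fin n) ℝ) = 1 := _root_.map_one φ
    rw [h1]
    simp only [ContinuousLinearMap.sub_apply, ContinuousLinearMap.smul_apply, h2,
      ContinuousLinearMap.one_apply, inner_sub_left, real_inner_smul_left,
      real_inner_self_eq_norm_sq]
  have hqH_low : ∀ x : EuclideanSpace ℝ (Fin n), ν * ‖x‖ ^ 2 ≤ inner ℝ (φ H x) x := by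
    intro x
    have := specAux_quad_nonneg hlow x
    rw [hquad_sub H ν x] at this
    linarith
  have hqH_up : ∀ x : EuclideanSpace ℝ (Fin n), (inner ℝ (φ H x) x : ℝ) ≤ δ * ‖x‖ ^ 2 := by
    intro x
    have h1 := specAux_quad_nonneg hup x
    have h2 : δ • (1 : Matrix (Fin n) (Fin n) ℝ) - H = -(H - δ • 1) := by rw [neg_sub]
    rw [h2] at h1
    have h3 : (inner ℝ (φ (-(H - δ • 1)) x) x : ℝ) = -(inner ℝ (φ (H - δ • 1) x) x) := by
      rw [map_neg, ContinuousLinearMap.neg_apply, inner_neg_left]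
    rw [h3, hquad_sub H δ x] at h1
    linarith
  -- quadratic form of U
  have hqU : ∀ x : EuclideanSpace ℝ (Fin n),
      (inner ℝ (φ U x) x : ℝ) = ‖x‖ ^ 2 - μ * inner ℝ (φ H x) x := by
    intro x
    have h1 : φ U = φ 1 - μ • φ H := by rw [hU, map_sub, _root_.map_smul]
    have h2 : φ (1 : Matrix (Fin n) (Fin n) ℝ) = 1 := _root_.map_one φ
    rw [h1]
    simp only [ContinuousLinearMap.sub_apply, ContinuousLinearMap.smul_apply, h2,
      ContinuousLinearMap.one_apply, inner_sub_left, real_inner_smul_left,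
      real_inner_self_eq_norm_sq]
  -- symmetry of U and Pmat as operators
  have hUT : Uᵀ = U := by
    rw [hU]
    simp [Matrix.transpose_sub, Matrix.transpose_smul, hHsymm.eq]
  have hPT : Pmatᵀ = Pmat := by
    have := hPmat.1
    simpa [Matrix.conjTranspose, Matrix.IsSymm] using this
  have hSsa : ∀ x y : EuclideanSpace ℝ (Fin n), (inner ℝ (φ U x) y : ℝ) = inner ℝ x (φ U y) :=
    fun x y => specAux_symm hUT x y
  have hTsa : ∀ x y : EuclideanSpace ℝ (Fin n), (inner ℝ (φ Pmat x) y : ℝ) = inner ℝ x (φ Pmat y) :=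
    fun x y => specAux_symm hPT x y
  -- norm bound for U
  have hSq : ∀ x : EuclideanSpace ℝ (Fin n), |(inner ℝ (φ U x) x : ℝ)| ≤ (1 - μ * ν) * ‖x‖ ^ 2 := by
    intro x
    rw [abs_le]
    have h1 := hqH_low x
    have h2 := hqH_up x
    have h3 := hqU x
    have hnx : (0:ℝ) ≤ ‖x‖ ^ 2 := by positivity
    constructor
    · nlinarith
    · nlinarith
  have hSnorm : ‖φ U‖ ≤ 1 - μ * ν :=
    specAux_opNorm_le (φ U) hSsa (by linarith) hSq
  -- the max of the quadratic form of Pmat on the sphere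
  have hne : (Fin n) := ⟨0, hn⟩
  have hsph_ne : (Metric.sphere (0 : EuclideanSpace ℝ (Fin n)) 1).Nonempty := by
    refine ⟨EuclideanSpace.single hne 1, ?_⟩
    simp [EuclideanSpace.norm_single]
  have hcomp : IsCompact (Metric.sphere (0 : EuclideanSpace ℝ (Fin n)) 1) :=
    isCompact_sphere _ _
  have hcont : Continuous fun x : EuclideanSpace ℝ (Fin n) => (inner ℝ (φ Pmat x) x : ℝ) :=
    Continuous.inner ((φ Pmat).continuous) continuous_id
  obtain ⟨x₀, hx₀mem, hmax⟩ := hcomp.exists_isMaxOn hsph_ne hcont.continuousOn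
  have hx₀ : ‖x₀‖ = 1 := by
    simpa [mem_sphere_iff_norm] using hx₀mem
  set lam : ℝ := inner ℝ (φ Pmat x₀) x₀ with hlam
  have hlam0 : 0 ≤ lam := specAux_quad_nonneg hPmat x₀
  -- quadratic form bound for Pmat
  have hTq : ∀ x : EuclideanSpace ℝ (Fin n), |(inner ℝ (φ Pmat x) x : ℝ)| ≤ lam * ‖x‖ ^ 2 := by
    intro x
    rcases eq_or_ne x 0 with rfl | hx
    · simp
    have hxn : (0:ℝ) < ‖x‖ := norm_pos_iff.mpr hx
    set u : EuclideanSpace ℝ (Fin n) := ‖x‖⁻¹ • x with hu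
    have hun : ‖u‖ = 1 := by
      rw [hu, norm_smul, Real.norm_eq_abs, abs_of_nonneg (by positivity)]
      field_simp
    have humem : u ∈ Metric.sphere (0 : EuclideanSpace ℝ (Fin n)) 1 := by
      simp [mem_sphere_iff_norm, hun]
    have hb := hmax humem
    have hqu : (inner ℝ (φ Pmat u) u : ℝ) = ‖x‖⁻¹ ^ 2 * inner ℝ (φ Pmat x) x := by
      rw [hu]
      rw [_root_.map_smul, real_inner_smul_left, real_inner_smul_right]
      ring
    have hb' : ‖x‖⁻¹ ^ 2 * (inner ℝ (φ Pmat x) x : ℝ) ≤ lam := by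
      rw [← hqu]; exact hb
    have hpos : 0 ≤ (inner ℝ (φ Pmat x) x : ℝ) := specAux_quad_nonneg hPmat x
    rw [abs_of_nonneg hpos]
    have hinv : ‖x‖⁻¹ ^ 2 * ‖x‖ ^ 2 = 1 := by field_simp
    nlinarith
  have hTnorm : ‖φ Pmat‖ ≤ lam :=
    specAux_opNorm_le (φ Pmat) hTsa hlam0 hTq
  -- the Lyapunov identity
  have hPe : Pmat = U * Pmat * U + μ ^ 2 • R := by
    have h' : Pmat - (U * Pmat * U + μ ^ 2 • R) = -(U * Pmat * U - Pmat + μ ^ 2 • R) := by abel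
    rw [← sub_eq_zero, h', hlyap, neg_zero]
  have hPe' : φ Pmat = φ U * φ Pmat * φ U + μ ^ 2 • φ R := by
    have := congrArg φ hPe
    rwa [map_add, _root_.map_smul, _root_.map_mul, _root_.map_mul] at this
  -- evaluate at x₀
  have hval : lam = (inner ℝ (φ Pmat (φ U x₀)) (φ U x₀) : ℝ) + μ ^ 2 * inner ℝ (φ R x₀) x₀ := by
    have h0 : φ Pmat x₀ = φ U (φ Pmat (φ U x₀)) + μ ^ 2 • (φ R x₀) := by
      conv_lhs => rw [hPe']
      rfl
    rw [hlam, h0, inner_add_left, real_inner_smul_left, hSsa]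
  -- bounds
  have hUx₀ : ‖φ U x₀‖ ≤ 1 - μ * ν := by
    calc ‖φ U x₀‖ ≤ ‖φ U‖ * ‖x₀‖ := (φ U).le_opNorm x₀
    _ = ‖φ U‖ := by rw [hx₀, mul_one]
    _ ≤ 1 - μ * ν := hSnorm
  have hb1 : (inner ℝ (φ Pmat (φ U x₀)) (φ U x₀) : ℝ) ≤ lam * (1 - μ * ν) ^ 2 := by
    have h1 : (inner ℝ (φ Pmat (φ U x₀)) (φ U x₀) : ℝ) ≤ ‖φ Pmat (φ U x₀)‖ * ‖φ U x₀‖ :=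
      real_inner_le_norm _ _
    have h2 : ‖φ Pmat (φ U x₀)‖ ≤ ‖φ Pmat‖ * ‖φ U x₀‖ := (φ Pmat).le_opNorm _
    have h3 : (0:ℝ) ≤ ‖φ U x₀‖ := norm_nonneg _
    have h4 : (0:ℝ) ≤ ‖φ Pmat‖ := norm_nonneg _
    have h5 : ‖φ U x₀‖ ^ 2 ≤ (1 - μ * ν) ^ 2 := by nlinarith
    have h6 : ‖φ Pmat‖ * ‖φ U x₀‖ ^ 2 ≤ lam * (1 - μ * ν) ^ 2 :=
      mul_le_mul hTnorm h5 (by positivity) hlam0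
    nlinarith
  have hb2 : (inner ℝ (φ R x₀) x₀ : ℝ) ≤ specNorm R := by
    have h1 : (inner ℝ (φ R x₀) x₀ : ℝ) ≤ ‖φ R x₀‖ * ‖x₀‖ := real_inner_le_norm _ _
    have h2 : ‖φ R x₀‖ ≤ ‖φ R‖ * ‖x₀‖ := (φ R).le_opNorm _
    rw [hx₀] at h1 h2
    simp only [mul_one] at h1 h2
    exact le_trans h1 h2
  have hfin : lam ≤ lam * (1 - μ * ν) ^ 2 + μ ^ 2 * specNorm R := by
    rw [hval]
    have := hb2
    nlinarith [hb1]
  -- conclude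
  have h6 : μ * (lam * (2 * ν - μ * ν ^ 2)) ≤ μ * (μ * specNorm R) := by nlinarith [hfin]
  have key : lam * (2 * ν - μ * ν ^ 2) ≤ μ * specNorm R := le_of_mul_le_mul_left h6 hμ
  have hspec : specNorm Pmat = ‖φ Pmat‖ := rfl
  rw [hspec, le_div_iff₀ hden]
  have := mul_le_mul_of_nonneg_right hTnorm hden.le
  linarith
end

section
/- Let L be a connected-graph Laplacian with smallest nonzero eigenvalue λ₂ and pseudo-inverse L†. If a symmetric matrix Σ̂ satisfies Σ̂𝟙 = 0 and ‖Σ̂ - L†‖ < 1/(2‖L‖), then Σ̂† exists on span{𝟙}^⊥ and ‖Σ̂† - L‖ ≤ c ‖L‖² ‖Σ̂ - L†‖ / (1 - ‖L‖‖Σ̂ - L†‖) for a constant c ≤ 3. -/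
open Matrix

/-- `Ld` is the Moore–Penrose pseudo-inverse of `L` (real case). -/
def IsMoorePenroseInv {K : ℕ} (L Ld : Matrix (Fin K) (Fin K) ℝ) : Prop :=
  L * Ld * L = L ∧ Ld * L * Ld = Ld ∧ (L * Ld).IsSymm ∧ (Ld * L).IsSymm

lemma mp_unique {K : ℕ} {A X Y : Matrix (Fin K) (Fin K) ℝ}
    (hX : IsMoorePenroseInv A X) (hY : IsMoorePenroseInv A Y) : X = Y := by
  obtain ⟨hX1, hX2, hX3, hX4⟩ := hX
  obtain ⟨hY1, hY2, hY3, hY4⟩ := hY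
  have hAX : A * X = A * Y := by
    calc A * X = (A * X)ᵀ := hX3.symm
      _ = Xᵀ * Aᵀ := Matrix.transpose_mul _ _
      _ = Xᵀ * (A * Y * A)ᵀ := by rw [hY1]
      _ = Xᵀ * (Aᵀ * (A * Y)ᵀ) := by rw [Matrix.transpose_mul]
      _ = Xᵀ * Aᵀ * (A * Y)ᵀ := by rw [mul_assoc]
      _ = (A * X)ᵀ * (A * Y)ᵀ := by rw [← Matrix.transpose_mul]
      _ = (A * X) * (A * Y) := by rw [hX3, hY3]
      _ = (A * X * A) * Y := by rw [mul_assoc (A*X) A Y]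
      _ = A * Y := by rw [hX1]
  have hXA : X * A = Y * A := by
    calc X * A = (X * A)ᵀ := hX4.symm
      _ = Aᵀ * Xᵀ := Matrix.transpose_mul _ _
      _ = (A * Y * A)ᵀ * Xᵀ := by rw [hY1]
      _ = ((Y * A)ᵀ * Aᵀ) * Xᵀ := by rw [mul_assoc A Y A, Matrix.transpose_mul]
      _ = (Y * A)ᵀ * (Aᵀ * Xᵀ) := by rw [mul_assoc]
      _ = (Y * A)ᵀ * (X * A)ᵀ := by rw [← Matrix.transpose_mul]
      _ = (Y * A) * (X * A) := by rw [hX4, hY4]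
      _ = Y * (A * X * A) := by rw [mul_assoc Y A (X*A), mul_assoc A X A]
      _ = Y * A := by rw [hX1]
  calc X = X * A * X := hX2.symm
    _ = Y * A * X := by rw [hXA]
    _ = Y * (A * X) := mul_assoc _ _ _
    _ = Y * (A * Y) := by rw [hAX]
    _ = Y * A * Y := (mul_assoc _ _ _).symm
    _ = Y := hY2

lemma mp_transpose {K : ℕ} {A X : Matrix (Fin K) (Fin K) ℝ}
    (h : IsMoorePenroseInv A X) : IsMoorePenroseInv Aᵀ Xᵀ := by
  obtain ⟨h1, h2, h3, h4⟩ := h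
  refine ⟨?_, ?_, ?_, ?_⟩
  · rw [← Matrix.transpose_mul, ← Matrix.transpose_mul, ← mul_assoc, h1]
  · rw [← Matrix.transpose_mul, ← Matrix.transpose_mul, ← mul_assoc, h2]
  · show (Aᵀ * Xᵀ)ᵀ = Aᵀ * Xᵀ
    rw [← Matrix.transpose_mul, Matrix.transpose_transpose, h4.eq]
  · show (Xᵀ * Aᵀ)ᵀ = Xᵀ * Aᵀ
    rw [← Matrix.transpose_mul, Matrix.transpose_transpose, h3.eq]

lemma eq_of_mulVec {K : ℕ} {A B : Matrix (Fin K) (Fin K) ℝ}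
    (h : ∀ x, A *ᵥ x = B *ᵥ x) : A = B := by
  ext i j
  have := congrFun (h (Pi.single j 1)) i
  simpa using this

lemma mul_q_zero {K : ℕ} {A : Matrix (Fin K) (Fin K) ℝ}
    (hA : A *ᵥ (fun _ => (1:ℝ)) = 0) :
    A * Matrix.of (fun _ _ => (K:ℝ)⁻¹) = 0 := by
  ext i j
  have h := congrFun hA i
  simp only [Matrix.mulVec, dotProduct, mul_one, Pi.zero_apply] at h
  simp only [Matrix.mul_apply, Matrix.of_apply, Matrix.zero_apply]
  rw [← Finset.sum_mul, h, zero_mul]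

lemma q_mul_zero {K : ℕ} {A : Matrix (Fin K) (Fin K) ℝ}
    (hA : Aᵀ *ᵥ (fun _ => (1:ℝ)) = 0) :
    Matrix.of (fun _ _ => (K:ℝ)⁻¹) * A = 0 := by
  ext i j
  have h := congrFun hA j
  simp only [Matrix.mulVec, dotProduct, Matrix.transpose_apply, mul_one,
    Pi.zero_apply] at h
  simp only [Matrix.mul_apply, Matrix.of_apply, Matrix.zero_apply]
  rw [← Finset.mul_sum, h, mul_zero]

lemma q_mul_q {K : ℕ} (hK : 0 < K) :
    (Matrix.of (fun _ _ => (K:ℝ)⁻¹) : Matrix (Fin K) (Fin K) ℝ) *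
      Matrix.of (fun _ _ => (K:ℝ)⁻¹) = Matrix.of (fun _ _ => (K:ℝ)⁻¹) := by
  have hKR : (K:ℝ) ≠ 0 := Nat.cast_ne_zero.mpr hK.ne'
  ext i j
  simp only [Matrix.mul_apply, Matrix.of_apply, Finset.sum_const, Finset.card_univ,
    Fintype.card_fin, nsmul_eq_mul]
  field_simp

lemma q_mulVec_ones {K : ℕ} (hK : 0 < K) :
    (Matrix.of (fun _ _ => (K:ℝ)⁻¹) : Matrix (Fin K) (Fin K) ℝ) *ᵥ (fun _ => (1:ℝ)) =
      fun _ => (1:ℝ) := by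
  have hKR : (K:ℝ) ≠ 0 := Nat.cast_ne_zero.mpr hK.ne'
  funext i
  simp only [Matrix.mulVec, dotProduct, Matrix.of_apply, mul_one, Finset.sum_const,
    Finset.card_univ, Fintype.card_fin, nsmul_eq_mul]
  field_simp

lemma LdL_eq {K : ℕ} (hK : 0 < K) {L Ld : Matrix (Fin K) (Fin K) ℝ}
    (hnull : ∀ x : Fin K → ℝ, L *ᵥ x = 0 ↔ ∃ c : ℝ, x = fun _ => c)
    (hLd : IsMoorePenroseInv L Ld) :
    Ld * L = 1 - Matrix.of (fun _ _ => (K:ℝ)⁻¹) := by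
  have hKR : (K:ℝ) ≠ 0 := Nat.cast_ne_zero.mpr hK.ne'
  set q : Matrix (Fin K) (Fin K) ℝ := Matrix.of (fun _ _ => (K:ℝ)⁻¹) with hq
  have hL1 : L *ᵥ (fun _ => (1:ℝ)) = 0 := (hnull _).mpr ⟨1, rfl⟩
  have hrow0 : (Ld * L) *ᵥ (fun _ => (1:ℝ)) = 0 := by
    rw [← Matrix.mulVec_mulVec, hL1, Matrix.mulVec_zero]
  have hrow : ∀ i, ∑ j, (Ld * L) i j = 0 := by
    intro i
    have := congrFun hrow0 i
    simpa [Matrix.mulVec, dotProduct] using this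
  have hcol : ∀ j, ∑ i, (Ld * L) i j = 0 := by
    intro j
    have hs : ∀ i, (Ld * L) i j = (Ld * L) j i := by
      intro i
      conv_lhs => rw [← hLd.2.2.2.eq]
      rfl
    rw [Finset.sum_congr rfl (fun i _ => hs i)]
    exact hrow j
  apply eq_of_mulVec
  intro x
  set c : ℝ := (∑ i, x i) / K with hc
  set y : Fin K → ℝ := x - (fun _ => c) with hy
  have hysum : ∑ i, y i = 0 := by
    simp only [hy, Pi.sub_apply, Finset.sum_sub_distrib, Finset.sum_const,
      Finset.card_univ, Fintype.card_fin, nsmul_eq_mul, hc]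
    field_simp
    ring
  have hLy : L *ᵥ ((Ld * L) *ᵥ y - y) = 0 := by
    rw [Matrix.mulVec_sub, Matrix.mulVec_mulVec, ← mul_assoc, hLd.1, sub_self]
  obtain ⟨c', hc'⟩ := (hnull _).mp hLy
  have hsum0 : ∑ i, ((Ld * L) *ᵥ y) i = 0 := by
    simp only [Matrix.mulVec, dotProduct]
    rw [Finset.sum_comm]
    have : ∀ j ∈ Finset.univ, ∑ i, (Ld * L) i j * y j = 0 := by
      intro j _
      rw [← Finset.sum_mul, hcol j, zero_mul]
    rw [Finset.sum_congr rfl this]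
    simp
  have hc'0 : c' = 0 := by
    have := congrArg (fun v => ∑ i, v i) hc'
    simp only [Pi.sub_apply, Finset.sum_sub_distrib, hsum0, hysum, sub_zero,
      Finset.sum_const, Finset.card_univ, Fintype.card_fin, nsmul_eq_mul] at this
    simpa [hKR, sub_eq_zero] using this.symm
  have hfix : (Ld * L) *ᵥ y = y := by
    have h0 : (Ld * L) *ᵥ y - y = 0 := by rw [hc']; funext i; simp [hc'0]
    exact sub_eq_zero.mp h0
  have hqx : q *ᵥ x = fun _ => c := by
    funext i
    simp only [Matrix.mulVec, dotProduct, hq, Matrix.of_apply, hc]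
    rw [← Finset.mul_sum]
    field_simp
  have hconst : (Ld * L) *ᵥ (fun _ => c) = 0 := by
    have : (fun _ : Fin K => c) = c • (fun _ : Fin K => (1:ℝ)) := by
      funext i; simp
    rw [this, Matrix.mulVec_smul, hrow0, smul_zero]
  calc (Ld * L) *ᵥ x = (Ld * L) *ᵥ (y + fun _ => c) := by
        rw [show (y + fun _ : Fin K => c) = x from by funext i; simp [hy]]
    _ = (Ld * L) *ᵥ y + (Ld * L) *ᵥ (fun _ => c) := Matrix.mulVec_add _ _ _
    _ = y := by rw [hfix, hconst, add_zero]
    _ = x - q *ᵥ x := by rw [hqx]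
    _ = (1 - q) *ᵥ x := by rw [Matrix.sub_mulVec, Matrix.one_mulVec]

set_option maxHeartbeats 2000000 in
/-- Let `L` be a connected-graph Laplacian with pseudo-inverse `L†`. If a
symmetric matrix `Σ̂` satisfies `Σ̂𝟙 = 0` and `‖Σ̂ - L†‖ < 1/(2‖L‖)`, then the pseudo-inverse
`Σ̂†` exists (inverting `Σ̂` on `span{𝟙}^⊥`) and
`‖Σ̂† - L‖ ≤ c ‖L‖² ‖Σ̂ - L†‖ / (1 - ‖L‖‖Σ̂ - L†‖)` for a constant `c ≤ 3`. -/
theorem pinv_perturbation_bound (K : ℕ) (hK : 0 < K)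
    (L Ld Sh : Matrix (Fin K) (Fin K) ℝ)
    (hL : L.PosSemidef)
    (hnull : ∀ x : Fin K → ℝ, L *ᵥ x = 0 ↔ ∃ c : ℝ, x = fun _ => c)
    (hLd : IsMoorePenroseInv L Ld)
    (hShsymm : Sh.IsSymm)
    (hSh1 : Sh *ᵥ (fun _ => (1 : ℝ)) = 0)
    (hclose : specNorm (Sh - Ld) < 1 / (2 * specNorm L)) :
    ∃ Shd : Matrix (Fin K) (Fin K) ℝ, IsMoorePenroseInv Sh Shd ∧
      ∀ Shd' : Matrix (Fin K) (Fin K) ℝ, IsMoorePenroseInv Sh Shd' →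
        ∃ c : ℝ, 0 < c ∧ c ≤ 3 ∧
          specNorm (Shd' - L) ≤
            c * (specNorm L) ^ 2 * specNorm (Sh - Ld)
              / (1 - specNorm L * specNorm (Sh - Ld)) := by
  classical
  have hKR : (K:ℝ) ≠ 0 := Nat.cast_ne_zero.mpr hK.ne'
  set e := Matrix.toEuclideanCLM (𝕜 := ℝ) (n := Fin K) with he
  have hspec : ∀ A : Matrix (Fin K) (Fin K) ℝ, specNorm A = ‖e A‖ := fun A => rfl
  -- dispose of the degenerate case
  by_cases hL0 : specNorm L = 0
  · exfalso
    have h1 : (0:ℝ) ≤ specNorm (Sh - Ld) := by rw [hspec]; exact norm_nonneg _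
    rw [hL0] at hclose
    norm_num at hclose
    exact absurd hclose (not_lt.2 h1)
  have hLpos : 0 < specNorm L :=
    lt_of_le_of_ne (by rw [hspec]; exact norm_nonneg _) (Ne.symm hL0)
  set E : Matrix (Fin K) (Fin K) ℝ := Sh - Ld with hE
  set eps : ℝ := specNorm E with heps
  have heps0 : 0 ≤ eps := by rw [heps, hspec]; exact norm_nonneg _
  have hprod : specNorm L * eps < 1/2 := by
    have h2 := mul_lt_mul_of_pos_left hclose hLpos
    rw [show specNorm L * (1/(2 * specNorm L)) = 1/2 from by field_simp] at h2
    exact h2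
  -- matrices
  set q : Matrix (Fin K) (Fin K) ℝ := Matrix.of (fun _ _ => (K:ℝ)⁻¹) with hq
  set M : Matrix (Fin K) (Fin K) ℝ := Sh + q with hM
  set N : Matrix (Fin K) (Fin K) ℝ := Ld + q with hN
  have hqq : q * q = q := q_mul_q hK
  have hqT : qᵀ = q := rfl
  have hLsymm : Lᵀ = L := by
    rw [← Matrix.conjTranspose_eq_transpose_of_trivial]; exact hL.1
  have hLdsymm : Ldᵀ = Ld := by
    have h := mp_transpose hLd
    rw [hLsymm] at h
    exact mp_unique h hLd
  have hL1 : L *ᵥ (fun _ => (1:ℝ)) = 0 := (hnull _).mpr ⟨1, rfl⟩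
  have hSq : Sh * q = 0 := mul_q_zero hSh1
  have hqS : q * Sh = 0 := q_mul_zero (by rw [hShsymm.eq]; exact hSh1)
  have hLq : L * q = 0 := mul_q_zero hL1
  have hqL : q * L = 0 := q_mul_zero (by rw [hLsymm]; exact hL1)
  have hLdL : Ld * L = 1 - q := LdL_eq hK hnull hLd
  have hLLd : L * Ld = 1 - q := by
    calc L * Ld = Lᵀ * Ldᵀ := by rw [hLsymm, hLdsymm]
      _ = (Ld * L)ᵀ := (Matrix.transpose_mul _ _).symm
      _ = Ld * L := hLd.2.2.2
      _ = 1 - q := hLdL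
  have hLd1 : Ld *ᵥ (fun _ => (1:ℝ)) = 0 := by
    have h1 : (1 - q) *ᵥ (fun _ => (1:ℝ)) = 0 := by
      rw [Matrix.sub_mulVec, Matrix.one_mulVec, q_mulVec_ones hK, sub_self]
    calc Ld *ᵥ (fun _ => (1:ℝ)) = (Ld * (L * Ld)) *ᵥ (fun _ => (1:ℝ)) := by
          rw [← mul_assoc, hLd.2.1]
      _ = Ld *ᵥ ((L * Ld) *ᵥ (fun _ => (1:ℝ))) := (Matrix.mulVec_mulVec _ _ _).symm
      _ = Ld *ᵥ ((1 - q) *ᵥ (fun _ => (1:ℝ))) := by rw [hLLd]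
      _ = 0 := by rw [h1, Matrix.mulVec_zero]
  have hLdq : Ld * q = 0 := mul_q_zero hLd1
  have hqLd : q * Ld = 0 := q_mul_zero (by rw [hLdsymm]; exact hLd1)
  have hEq : E * q = 0 := by rw [hE, sub_mul, hSq, hLdq, sub_zero]
  have hqE : q * E = 0 := by rw [hE, mul_sub, hqS, hqLd, sub_zero]
  have hNL : N * (L + q) = 1 := by
    rw [hN, add_mul, mul_add, mul_add, hLdL, hLdq, hqL, hqq]
    abel
  have hLN : (L + q) * N = 1 := by
    rw [hN, add_mul, mul_add, mul_add, hLLd, hLq, hqLd, hqq]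
    abel
  have hMfact : M = N * (1 + L * E) := by
    have h1 : N * (L * E) = E := by
      rw [hN, add_mul, ← mul_assoc, ← mul_assoc, hLdL, hqL, zero_mul, add_zero,
        sub_mul, one_mul, hqE, sub_zero]
    rw [mul_add, mul_one, h1, hM, hN, hE]
    abel
  -- CLM side
  set t : EuclideanSpace ℝ (Fin K) →L[ℝ] EuclideanSpace ℝ (Fin K) := e L * e E with ht
  have ht_le : ‖t‖ ≤ specNorm L * eps := by
    rw [hspec L, heps, hspec E]; exact norm_mul_le _ _
  have ht1 : ‖t‖ < 1 := by linarith
  set u : (EuclideanSpace ℝ (Fin K) →L[ℝ] EuclideanSpace ℝ (Fin K))ˣ :=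
    Units.oneSub (-t) (by rwa [norm_neg]) with hu
  have hu_val : (u : EuclideanSpace ℝ (Fin K) →L[ℝ] EuclideanSpace ℝ (Fin K)) = 1 + t := by
    rw [hu, Units.val_oneSub, sub_neg_eq_add]
  have h1b : 0 < 1 - specNorm L * eps := by linarith
  have huinv_norm :
      ‖((u⁻¹ : _ˣ) : EuclideanSpace ℝ (Fin K) →L[ℝ] EuclideanSpace ℝ (Fin K))‖ ≤
        (1 - specNorm L * eps)⁻¹ := by
    set v := ((u⁻¹ : _ˣ) : EuclideanSpace ℝ (Fin K) →L[ℝ] EuclideanSpace ℝ (Fin K)) with hv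
    have hmulv : (1 + t) * v = 1 := by rw [← hu_val]; exact u.mul_inv
    have hrel : v = 1 - t * v := by
      have h4 : v + t * v = 1 := by rw [← hmulv, add_mul, one_mul]
      rw [← h4]; abel
    have hbound : ‖v‖ ≤ 1 + ‖t‖ * ‖v‖ := by
      calc ‖v‖ = ‖1 - t * v‖ := by rw [← hrel]
        _ ≤ ‖(1 : EuclideanSpace ℝ (Fin K) →L[ℝ] EuclideanSpace ℝ (Fin K))‖ + ‖t * v‖ :=
            norm_sub_le _ _
        _ ≤ 1 + ‖t‖ * ‖v‖ := by
            gcongr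
            · rw [ContinuousLinearMap.one_def]; exact ContinuousLinearMap.norm_id_le
            · exact norm_mul_le _ _
    rw [inv_eq_one_div, le_div_iff₀ h1b]
    nlinarith [norm_nonneg v, mul_le_mul_of_nonneg_left ht_le (norm_nonneg v)]
  -- matrix B : inverse of (1 + L*E)
  set B : Matrix (Fin K) (Fin K) ℝ := e.symm ((u⁻¹ : _ˣ) :
    EuclideanSpace ℝ (Fin K) →L[ℝ] EuclideanSpace ℝ (Fin K)) with hB
  have heB : e B = ((u⁻¹ : _ˣ) : EuclideanSpace ℝ (Fin K) →L[ℝ] EuclideanSpace ℝ (Fin K)) :=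
    e.apply_symm_apply _
  have he1 : e (1 + L * E) = (u : EuclideanSpace ℝ (Fin K) →L[ℝ] EuclideanSpace ℝ (Fin K)) := by
    rw [map_add, _root_.map_one, _root_.map_mul, hu_val, ht]
  have hB1 : (1 + L * E) * B = 1 := by
    calc (1 + L * E) * B = e.symm (e (1 + L * E)) * e.symm ((u⁻¹ : _ˣ) :
          EuclideanSpace ℝ (Fin K) →L[ℝ] EuclideanSpace ℝ (Fin K)) := by
            rw [e.symm_apply_apply, hB]
      _ = e.symm ((u : EuclideanSpace ℝ (Fin K) →L[ℝ] EuclideanSpace ℝ (Fin K)) * ((u⁻¹ : _ˣ) :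
          EuclideanSpace ℝ (Fin K) →L[ℝ] EuclideanSpace ℝ (Fin K))) := by
            rw [_root_.map_mul, he1]
      _ = 1 := by rw [u.mul_inv, _root_.map_one]
  have hB2 : B * (1 + L * E) = 1 := by
    calc B * (1 + L * E) = e.symm ((u⁻¹ : _ˣ) :
          EuclideanSpace ℝ (Fin K) →L[ℝ] EuclideanSpace ℝ (Fin K)) * e.symm (e (1 + L * E)) := by
            rw [e.symm_apply_apply, hB]
      _ = e.symm (((u⁻¹ : _ˣ) :
          EuclideanSpace ℝ (Fin K) →L[ℝ] EuclideanSpace ℝ (Fin K)) *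
          (u : EuclideanSpace ℝ (Fin K) →L[ℝ] EuclideanSpace ℝ (Fin K))) := by
            rw [_root_.map_mul, he1]
      _ = 1 := by rw [u.inv_mul, _root_.map_one]
  have hMunit : IsUnit M := by
    have hNunit : IsUnit N := isUnit_iff_exists.mpr ⟨L + q, hNL, hLN⟩
    have h1unit : IsUnit (1 + L * E) := isUnit_iff_exists.mpr ⟨B, hB1, hB2⟩
    rw [hMfact]; exact hNunit.mul h1unit
  have hMdet : IsUnit M.det := (Matrix.isUnit_iff_isUnit_det M).mp hMunit
  have hMM : M * M⁻¹ = 1 := Matrix.mul_nonsing_inv _ hMdet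
  have hM'M : M⁻¹ * M = 1 := Matrix.nonsing_inv_mul _ hMdet
  have hMinv_eq : M⁻¹ = B * (L + q) := by
    have h1 : M * (B * (L + q)) = 1 := by
      rw [hMfact, mul_assoc N, ← mul_assoc (1 + L * E) B, hB1, one_mul, hNL]
    calc M⁻¹ = M⁻¹ * 1 := (mul_one _).symm
      _ = M⁻¹ * (M * (B * (L + q))) := by rw [h1]
      _ = (M⁻¹ * M) * (B * (L + q)) := (mul_assoc _ _ _).symm
      _ = B * (L + q) := by rw [hM'M, one_mul]
  have hMq : M * q = q := by rw [hM, add_mul, hSq, hqq, zero_add]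
  have hqM : q * M = q := by rw [hM, mul_add, hqS, hqq, zero_add]
  have hM'q : M⁻¹ * q = q := by
    have h0 : M⁻¹ * (M * q) = q := by rw [← mul_assoc, hM'M, one_mul]
    rw [hMq] at h0; exact h0
  have hqM' : q * M⁻¹ = q := by
    have h0 : (q * M) * M⁻¹ = q := by rw [mul_assoc, hMM, mul_one]
    rw [hqM] at h0; exact h0
  have hShM : Sh = M - q := by rw [hM]; abel
  have hShShd : Sh * (M⁻¹ - q) = 1 - q := by
    rw [hShM, sub_mul, mul_sub, mul_sub, hMM, hMq, hqM', hqq, sub_self, sub_zero]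
  have hShdSh : (M⁻¹ - q) * Sh = 1 - q := by
    rw [hShM, sub_mul, mul_sub, mul_sub, hM'M, hM'q, hqM, hqq, sub_self, sub_zero]
  have hMP : IsMoorePenroseInv Sh (M⁻¹ - q) := by
    refine ⟨?_, ?_, ?_, ?_⟩
    · rw [hShShd, sub_mul, one_mul, hqS, sub_zero]
    · rw [hShdSh, sub_mul, one_mul, mul_sub, hqM', hqq, sub_self, sub_zero]
    · show (Sh * (M⁻¹ - q))ᵀ = Sh * (M⁻¹ - q)
      rw [hShShd, Matrix.transpose_sub, Matrix.transpose_one, hqT]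
    · show ((M⁻¹ - q) * Sh)ᵀ = (M⁻¹ - q) * Sh
      rw [hShdSh, Matrix.transpose_sub, Matrix.transpose_one, hqT]
  refine ⟨M⁻¹ - q, hMP, ?_⟩
  intro Shd' hShd'
  refine ⟨1, one_pos, by norm_num, ?_⟩
  rw [mp_unique hShd' hMP]
  -- key identity
  have hBone : B - 1 = -(B * (L * E)) := by
    have h2 : B + B * (L * E) = 1 := by rw [← hB2, mul_add, mul_one]
    rw [← h2]; abel
  have hkey : (M⁻¹ - q) - L = -(B * (L * E) * L) := by
    rw [hMinv_eq]
    have h3 : B * (L + q) - q - L = (B - 1) * (L + q) := by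
      rw [sub_mul, one_mul]; abel
    rw [h3, hBone, neg_mul]
    congr 1
    rw [mul_add]
    have hz : B * (L * E) * q = 0 := by
      rw [mul_assoc, mul_assoc, hEq, mul_zero, mul_zero]
    rw [hz, add_zero]
  -- norm estimate
  have hnorm1 : specNorm ((M⁻¹ - q) - L) = ‖e B * t * e L‖ := by
    rw [hkey, hspec, map_neg, norm_neg, _root_.map_mul, _root_.map_mul, ht, _root_.map_mul]
  have hnorm2 : ‖e B * t * e L‖ ≤ (1 - specNorm L * eps)⁻¹ * (specNorm L * eps) * specNorm L := by
    calc ‖e B * t * e L‖ ≤ ‖e B * t‖ * ‖e L‖ := norm_mul_le _ _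
      _ ≤ (‖e B‖ * ‖t‖) * ‖e L‖ :=
          mul_le_mul_of_nonneg_right (norm_mul_le _ _) (norm_nonneg _)
      _ ≤ ((1 - specNorm L * eps)⁻¹ * (specNorm L * eps)) * specNorm L := by
          rw [hspec L]
          apply mul_le_mul_of_nonneg_right _ (norm_nonneg _)
          exact mul_le_mul (heB ▸ huinv_norm) ht_le (norm_nonneg _)
            (inv_nonneg.mpr h1b.le)
  have hfinal : (1 - specNorm L * eps)⁻¹ * (specNorm L * eps) * specNorm L =
      1 * specNorm L ^ 2 * eps / (1 - specNorm L * eps) := by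
    field_simp
  calc specNorm ((M⁻¹ - q) - L) = ‖e B * t * e L‖ := hnorm1
    _ ≤ (1 - specNorm L * eps)⁻¹ * (specNorm L * eps) * specNorm L := hnorm2
    _ = 1 * specNorm L ^ 2 * eps / (1 - specNorm L * eps) := hfinal
end
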